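/- For a topological space X and any x ∈ X, the small generated subgroup is contained in the quasi-small loop group, which is contained in the Spanier group: π₁^sg(X, x) ≤ π₁^qs(X, x) ≤ π₁^sp(X, x). -/

import Mathlib

/-!
Homotopic closeness is compatible with reversal and concatenation of paths. For concatenation
one pulls a partition back along the two halves of `Path.trans`; the resulting partitions are
only monotone, which is harmless because repeated points can be discarded. Hence `π₁^qs` is a
subgroup, and it contains every `[β α β⁻¹]` with `α` small, since `β α β⁻¹` is close to the
null-homotopic `β β⁻¹`; so it contains `π₁^sg`.

For `π₁^qs ≤ π₁^sp`, let `f` be close to a null-homotopic loop `h` and let `𝒰` be an open cover.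
A Lebesgue number gives a partition with `h [tᵢ₋₁, tᵢ] ⊆ Uᵢ ∈ 𝒰`, and closeness gives a loop
`γ ≃ f` agreeing with `h` at the `tᵢ` with `γ [tᵢ₋₁, tᵢ] ⊆ Uᵢ`. Telescoping writes `[γ][h]⁻¹` as a
product of conjugates of the loops `γ|[tᵢ₋₁, tᵢ] · (h|[tᵢ₋₁, tᵢ])⁻¹`, each lying in `Uᵢ`.
-/

open unitInterval

noncomputable section

attribute [local instance] Path.Homotopic.setoid

variable {X Y : Type*} [TopologicalSpace X] [TopologicalSpace Y]

/-- `HClose f g` : the path `f` is homotopically close to the path `g` rel `∂I`: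
for every partition `0 = t₀ < t₁ < ⋯ < tₙ = 1` and every sequence of open sets
`U₁, …, Uₙ` with `g [tᵢ₋₁, tᵢ] ⊆ Uᵢ`, there is a path `γ`, homotopic to `f` rel `∂I`,
with `γ [tᵢ₋₁, tᵢ] ⊆ Uᵢ` and `γ tᵢ = g tᵢ` for all `i`. -/
def HClose {a b : X} (f g : Path a b) : Prop :=
  ∀ (n : ℕ) (t : Fin (n + 1) → I), t 0 = 0 → t (Fin.last n) = 1 → StrictMono t →
    ∀ U : Fin n → Set X, (∀ i, IsOpen (U i)) →
      (∀ i : Fin n, g '' Set.Icc (t i.castSucc) (t i.succ) ⊆ U i) →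
      ∃ γ : Path a b,
        (∀ i : Fin n, γ '' Set.Icc (t i.castSucc) (t i.succ) ⊆ U i) ∧
        (∀ i : Fin (n + 1), γ (t i) = g (t i)) ∧ γ.Homotopic f

/-- The class of a loop at `x` as an element of the fundamental group. -/
def pathClass {x : X} (f : Path x x) : FundamentalGroup X x :=
  FundamentalGroup.fromPath ⟦f⟧

/-- The `H`-quasi-small loop set `π_H^qs(X, x)`. -/
def qsSet (x : X) (H : Set (FundamentalGroup X x)) : Set (FundamentalGroup X x) :=
  { p | ∃ f h : Path x x, pathClass f = p ∧ pathClass h ∈ H ∧ HClose f h }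

/-- The quasi-small loop group `π₁^qs(X, x)`. -/
def qs (x : X) : Set (FundamentalGroup X x) :=
  qsSet x (⊥ : Subgroup (FundamentalGroup X x))

/-- The Spanier group of `(X, x)` with respect to the cover `𝒰`. -/
def spanierCover (x : X) (𝒰 : Set (Set X)) : Subgroup (FundamentalGroup X x) :=
  Subgroup.closure { p | ∃ (y : X) (u : Path x y) (v : Path y y) (U : Set X),
    U ∈ 𝒰 ∧ Set.range v ⊆ U ∧ p = pathClass ((u.trans v).trans u.symm) }

/-- The (unbased) Spanier group `π₁^sp(X, x)`. -/
def spanierGroup (x : X) : Subgroup (FundamentalGroup X x) :=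
  ⨅ (𝒰 : Set (Set X)) (_ : ∀ U ∈ 𝒰, IsOpen U) (_ : ⋃₀ 𝒰 = Set.univ), spanierCover x 𝒰

/-- The small generated subgroup `π₁^sg(X, x)`. -/
def smallGenerated (x : X) : Subgroup (FundamentalGroup X x) :=
  Subgroup.closure { p | ∃ (y : X) (β : Path x y) (α : Path y y),
    HClose α (Path.refl y) ∧ p = pathClass ((β.trans α).trans β.symm) }

/-- `X` is homotopically path Hausdorff relative to `H ⊆ π₁(X, x)`. -/
def HPHausdorffRel (x : X) (H : Set (FundamentalGroup X x)) : Prop :=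
  ∀ (y : X) (α β : Path x y), pathClass (α.trans β.symm) ∉ H →
    ∃ (n : ℕ) (t : Fin (n + 1) → I), t 0 = 0 ∧ t (Fin.last n) = 1 ∧ StrictMono t ∧
      ∃ U : Fin n → Set X, (∀ i, IsOpen (U i)) ∧
        (∀ i : Fin n, α '' Set.Icc (t i.castSucc) (t i.succ) ⊆ U i) ∧
        ∀ γ : Path x y, (∀ i : Fin n, γ '' Set.Icc (t i.castSucc) (t i.succ) ⊆ U i) →
          (∀ i : Fin (n + 1), γ (t i) = α (t i)) → pathClass (γ.trans β.symm) ∉ H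

open CategoryTheory FundamentalGroupoid

def pathHom {a b : X} (p : Path a b) : mk a ⟶ mk b := ⟦p⟧

lemma pathClass_eq_pathHom {x : X} (f : Path x x) : pathClass f = pathHom f := rfl

lemma pathHom_refl (a : X) : pathHom (Path.refl a) = 𝟙 (mk a) := rfl

lemma pathHom_trans {a b c : X} (p : Path a b) (q : Path b c) :
    pathHom (p.trans q) = pathHom p ≫ pathHom q := rfl

lemma pathHom_symm {a b : X} (p : Path a b) : pathHom p.symm = inv (pathHom p) := by
  rw [← Groupoid.inv_eq_inv]; rfl

lemma pathHom_cast {a b a' b' : X} (p : Path a b) (ha : a' = a) (hb : b' = b) :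
    pathHom (p.cast ha hb) = eqToHom congr(mk $ha) ≫ pathHom p ≫ eqToHom congr(mk $hb.symm) := by
  subst ha hb; simp

lemma pathHom_eq_of_homotopic {a b : X} {p q : Path a b} (h : p.Homotopic q) :
    pathHom p = pathHom q :=
  Quotient.sound h

lemma pathHom_subpath_comp {a b : X} (γ : Path a b) (s₀ s₁ s₂ : I) :
    pathHom (γ.subpath s₀ s₁) ≫ pathHom (γ.subpath s₁ s₂) = pathHom (γ.subpath s₀ s₂) :=
  pathHom_eq_of_homotopic ⟨Path.Homotopy.subpathTransSubpath γ s₀ s₁ s₂⟩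

namespace unitInterval

lemma image_symm_Icc (a b : I) : σ '' Set.Icc a b = Set.Icc (σ b) (σ a) := by
  ext u
  constructor
  · rintro ⟨v, ⟨hav, hvb⟩, rfl⟩
    exact ⟨symm_le_symm.2 hvb, symm_le_symm.2 hav⟩
  · rintro ⟨hbu, hua⟩
    exact ⟨σ u, ⟨le_symm_comm.1 hua, symm_le_comm.1 hbu⟩, symm_symm u⟩

/-- `u ↦ min (2u) 1`, the reparametrization of the first half of `Path.trans`. -/
def stretchFirstHalf (u : I) : I := Set.projIcc 0 1 zero_le_one (2 * u)

/-- `u ↦ max (2u - 1) 0`, the reparametrization of the second half of `Path.trans`. -/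
def stretchSecondHalf (u : I) : I := Set.projIcc 0 1 zero_le_one (2 * u - 1)

lemma monotone_stretchFirstHalf : Monotone stretchFirstHalf := fun _ _ h =>
  Set.monotone_projIcc _ (by gcongr)

lemma monotone_stretchSecondHalf : Monotone stretchSecondHalf := fun _ _ h =>
  Set.monotone_projIcc _ (by gcongr)

@[simp] lemma stretchFirstHalf_zero : stretchFirstHalf 0 = 0 := by
  simp [stretchFirstHalf]

@[simp] lemma stretchFirstHalf_one : stretchFirstHalf 1 = 1 := by
  simp [stretchFirstHalf]

@[simp] lemma stretchSecondHalf_zero : stretchSecondHalf 0 = 0 := by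
  simp [stretchSecondHalf]

@[simp] lemma stretchSecondHalf_one : stretchSecondHalf 1 = 1 := by
  norm_num [stretchSecondHalf]

lemma coe_stretchFirstHalf_le (u : I) : (stretchFirstHalf u : ℝ) ≤ 2 * u := by
  simp only [stretchFirstHalf, Set.coe_projIcc]
  exact max_le (by linarith [u.2.1]) (min_le_right _ _)

lemma coe_stretchFirstHalf_of_le {u : I} (hu : (u : ℝ) ≤ 1 / 2) :
    (stretchFirstHalf u : ℝ) = 2 * u := by
  simp only [stretchFirstHalf, Set.coe_projIcc]
  rw [min_eq_right (by linarith), max_eq_right (by linarith [u.2.1])]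

lemma le_coe_stretchSecondHalf (u : I) : 2 * (u : ℝ) - 1 ≤ stretchSecondHalf u := by
  simp only [stretchSecondHalf, Set.coe_projIcc]
  exact le_max_of_le_right (le_min (by linarith [u.2.2]) le_rfl)

lemma coe_stretchSecondHalf_of_le {u : I} (hu : 1 / 2 ≤ (u : ℝ)) :
    (stretchSecondHalf u : ℝ) = 2 * u - 1 := by
  simp only [stretchSecondHalf, Set.coe_projIcc]
  rw [min_eq_right (by linarith [u.2.2]), max_eq_right (by linarith)]

end unitInterval

lemma Path.symm_image_Icc {a b : X} (γ : Path a b) (s t : I) :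
    γ.symm '' Set.Icc s t = γ '' Set.Icc (σ t) (σ s) := by
  rw [← unitInterval.image_symm_Icc, ← Set.image_comp]
  rfl

lemma Path.trans_apply_of_le_half {a b c : X} (p : Path a b) (q : Path b c) {u : I}
    (hu : (u : ℝ) ≤ 1 / 2) : p.trans q u = p (stretchFirstHalf u) := by
  rw [← Path.extend_extends', Path.extend_trans_of_le_half _ _ hu]
  rfl

lemma Path.trans_apply_of_half_le {a b c : X} (p : Path a b) (q : Path b c) {u : I}
    (hu : 1 / 2 ≤ (u : ℝ)) : p.trans q u = q (stretchSecondHalf u) := by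
  rw [← Path.extend_extends', Path.extend_trans_of_half_le _ _ hu]
  rfl

lemma Path.image_stretchFirstHalf_subset {a b c : X} (p : Path a b) (q : Path b c) {s t : I}
    (hs : (s : ℝ) ≤ 1 / 2) :
    p '' Set.Icc (stretchFirstHalf s) (stretchFirstHalf t) ⊆ p.trans q '' Set.Icc s t := by
  rintro _ ⟨v, ⟨hsv, hvt⟩, rfl⟩
  have hsv : 2 * (s : ℝ) ≤ v := coe_stretchFirstHalf_of_le hs ▸ hsv
  have hvt : (v : ℝ) ≤ 2 * t := le_trans hvt (coe_stretchFirstHalf_le t)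
  have hv : (v : ℝ) / 2 ≤ 1 / 2 := by linarith [v.2.2]
  let u : I := ⟨v / 2, by constructor <;> linarith [v.2.1, v.2.2]⟩
  refine ⟨u, ⟨?_, ?_⟩, ?_⟩
  · show (s : ℝ) ≤ v / 2; linarith
  · show (v : ℝ) / 2 ≤ t; linarith
  · rw [Path.trans_apply_of_le_half _ _ hv]
    congr 1
    ext
    rw [coe_stretchFirstHalf_of_le hv]
    ring

lemma Path.image_stretchSecondHalf_subset {a b c : X} (p : Path a b) (q : Path b c) {s t : I}
    (ht : 1 / 2 ≤ (t : ℝ)) :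
    q '' Set.Icc (stretchSecondHalf s) (stretchSecondHalf t) ⊆ p.trans q '' Set.Icc s t := by
  rintro _ ⟨v, ⟨hsv, hvt⟩, rfl⟩
  have hsv : 2 * (s : ℝ) - 1 ≤ v := le_trans (le_coe_stretchSecondHalf s) hsv
  have hvt : (v : ℝ) ≤ 2 * t - 1 := coe_stretchSecondHalf_of_le ht ▸ hvt
  have hv : 1 / 2 ≤ ((v : ℝ) + 1) / 2 := by linarith [v.2.1]
  let u : I := ⟨(v + 1) / 2, by constructor <;> linarith [v.2.1, v.2.2]⟩
  refine ⟨u, ⟨?_, ?_⟩, ?_⟩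
  · show (s : ℝ) ≤ (v + 1) / 2; linarith
  · show ((v : ℝ) + 1) / 2 ≤ t; linarith
  · rw [Path.trans_apply_of_half_le _ _ hv]
    congr 1
    ext
    rw [coe_stretchSecondHalf_of_le hv]
    ring

theorem Monotone.exists_consecutive_of_strictMono {α : Type*} [LinearOrder α] {n m : ℕ}
    {t : Fin (n + 1) → α} (ht : Monotone t) {T : Fin (m + 1) → α} (hT : StrictMono T)
    (hTt : ∀ j, ∃ i, t i = T j) (htT : ∀ i, ∃ j, T j = t i) {i : Fin n}
    (hi : t i.castSucc < t i.succ) :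
    ∃ j : Fin m, T j.castSucc = t i.castSucc ∧ T j.succ = t i.succ := by
  obtain ⟨j₁, hj₁⟩ := htT i.castSucc
  obtain ⟨j₂, hj₂⟩ := htT i.succ
  have hj : j₁ < j₂ := hT.lt_iff_lt.1 (hj₁ ▸ hj₂ ▸ hi)
  obtain ⟨j, rfl⟩ := Fin.exists_castSucc_eq.2 (Fin.ne_last_of_lt hj)
  refine ⟨j, hj₁, le_antisymm (hj₂ ▸ hT.monotone (Fin.castSucc_lt_iff_succ_le.1 hj)) ?_⟩
  obtain ⟨k, hk⟩ := hTt j.succ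
  have hik : i.castSucc < k :=
    ht.reflect_lt (hk ▸ hj₁ ▸ hT Fin.castSucc_lt_succ)
  exact hk ▸ ht (Fin.castSucc_lt_iff_succ_le.1 hik)

namespace HClose

variable {a b : X}

protected theorem refl (g : Path a b) : HClose g g :=
  fun _ _ _ _ _ _ _ hg => ⟨g, hg, fun _ => rfl, .refl g⟩

protected theorem symm {f g : Path a b} (H : HClose f g) : HClose f.symm g.symm := by
  intro n t ht0 ht1 ht U hU hg
  obtain ⟨γ, hγU, hγt, hγf⟩ := H n (fun k => σ (t k.rev)) (by simp [ht1]) (by simp [ht0])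
    (unitInterval.strictAnti_symm.comp (ht.comp_strictAnti Fin.rev_strictAnti))
    (fun k => U k.rev) (fun k => hU k.rev)
    (fun k => by rw [Fin.rev_castSucc, Fin.rev_succ, ← Path.symm_image_Icc]; exact hg k.rev)
  refine ⟨γ.symm, fun i => ?_, fun i => ?_, hγf.symm₂⟩
  · rw [Path.symm_image_Icc]
    simpa only [Fin.rev_castSucc, Fin.rev_succ, Fin.rev_rev] using hγU i.rev
  · simpa using hγt i.rev

theorem exists_of_monotone {f g : Path a b} (H : HClose f g) {n : ℕ}
    {t : Fin (n + 1) → I} (ht0 : t 0 = 0) (ht1 : t (Fin.last n) = 1) (ht : Monotone t)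
    (U : Fin n → Set X) (hU : ∀ i, IsOpen (U i))
    (hg : ∀ i : Fin n, g '' Set.Icc (t i.castSucc) (t i.succ) ⊆ U i) :
    ∃ γ : Path a b, (∀ i : Fin n, γ '' Set.Icc (t i.castSucc) (t i.succ) ⊆ U i) ∧
      (∀ i, γ (t i) = g (t i)) ∧ γ.Homotopic f := by
  classical
  set s := Finset.univ.image t
  obtain ⟨m, hm⟩ : ∃ m, s.card = m + 1 :=
    Nat.exists_eq_add_one.2 (Finset.univ_nonempty.image t).card_pos
  -- `T` lists the values of `t` without repetition; every nondegenerate interval of `t` is one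
  -- of the intervals of `T`.
  set T := s.orderEmbOfFin hm
  have hTt : ∀ j, ∃ i, t i = T j := fun j => by
    obtain ⟨i, -, hi⟩ := Finset.mem_image.1 (s.orderEmbOfFin_mem hm j)
    exact ⟨i, hi⟩
  have htT : ∀ i, ∃ j, T j = t i := fun i => by
    have : t i ∈ Set.range T := by rw [Finset.range_orderEmbOfFin]; simp [s]
    exact this
  have hT0 : T 0 = 0 := by
    obtain ⟨j, hj⟩ := htT 0
    exact le_antisymm (ht0 ▸ hj ▸ T.monotone (Fin.zero_le j)) unitInterval.nonneg'
  have hT1 : T (Fin.last m) = 1 := by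
    obtain ⟨j, hj⟩ := htT (Fin.last n)
    exact le_antisymm unitInterval.le_one' (ht1 ▸ hj ▸ T.monotone (Fin.le_last j))
  let V : Fin m → Set X := fun j =>
    ⋂ i ∈ {i : Fin n | t i.castSucc = T j.castSucc ∧ t i.succ = T j.succ}, U i
  obtain ⟨γ, hγV, hγT, hγf⟩ := H m T hT0 hT1 T.strictMono V
    (fun j => (Set.toFinite _).isOpen_biInter fun i _ => hU i)
    (fun j => Set.subset_iInter₂ fun i hi => by rw [← hi.1, ← hi.2]; exact hg i)
  have hγt : ∀ i, γ (t i) = g (t i) := fun i => by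
    obtain ⟨j, hj⟩ := htT i
    rw [← hj]
    exact hγT j
  refine ⟨γ, fun i => ?_, hγt, hγf⟩
  rcases (ht (Fin.castSucc_le_succ i)).lt_or_eq with hlt | heq
  · obtain ⟨j, hj₁, hj₂⟩ := ht.exists_consecutive_of_strictMono T.strictMono hTt htT hlt
    rw [← hj₁, ← hj₂]
    exact (hγV j).trans (Set.iInter₂_subset i ⟨hj₁.symm, hj₂.symm⟩)
  · simpa only [heq, Set.Icc_self, Set.image_singleton, hγt] using hg i

protected theorem trans {c : X} {f₁ g₁ : Path a b} {f₂ g₂ : Path b c}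
    (H₁ : HClose f₁ g₁) (H₂ : HClose f₂ g₂) : HClose (f₁.trans f₂) (g₁.trans g₂) := by
  intro n t ht0 ht1 ht U hU hg
  -- `stretchFirstHalf` collapses the intervals right of `1/2` to the point `1`, where `g₁` need
  -- not lie in `U i`; those intervals are left unconstrained.
  obtain ⟨γ₁, hγ₁U, hγ₁t, hγ₁f⟩ := H₁.exists_of_monotone (t := stretchFirstHalf ∘ t)
    (by simp [ht0]) (by simp [ht1]) (monotone_stretchFirstHalf.comp ht.monotone)
    (fun i => if (t i.castSucc : ℝ) ≤ 1 / 2 then U i else Set.univ)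
    (fun i => by split_ifs; exacts [hU i, isOpen_univ])
    (fun i => by
      split_ifs with h
      exacts [(g₁.image_stretchFirstHalf_subset g₂ h).trans (hg i), Set.subset_univ _])
  obtain ⟨γ₂, hγ₂U, hγ₂t, hγ₂f⟩ := H₂.exists_of_monotone (t := stretchSecondHalf ∘ t)
    (by simp [ht0]) (by simp [ht1]) (monotone_stretchSecondHalf.comp ht.monotone)
    (fun i => if 1 / 2 ≤ (t i.succ : ℝ) then U i else Set.univ)
    (fun i => by split_ifs; exacts [hU i, isOpen_univ])
    (fun i => by
      split_ifs with h
      exacts [(g₁.image_stretchSecondHalf_subset g₂ h).trans (hg i), Set.subset_univ _])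
  refine ⟨γ₁.trans γ₂, fun i => ?_, fun i => ?_, hγ₁f.hcomp hγ₂f⟩
  · rintro _ ⟨u, hu, rfl⟩
    rcases le_total (u : ℝ) (1 / 2) with h | h
    · have hi : (t i.castSucc : ℝ) ≤ 1 / 2 := le_trans hu.1 h
      rw [Path.trans_apply_of_le_half _ _ h]
      have hmem := hγ₁U i <|
        Set.mem_image_of_mem γ₁ ⟨monotone_stretchFirstHalf hu.1, monotone_stretchFirstHalf hu.2⟩
      rwa [if_pos hi] at hmem
    · have hi : 1 / 2 ≤ (t i.succ : ℝ) := le_trans h hu.2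
      rw [Path.trans_apply_of_half_le _ _ h]
      have hmem := hγ₂U i <|
        Set.mem_image_of_mem γ₂ ⟨monotone_stretchSecondHalf hu.1, monotone_stretchSecondHalf hu.2⟩
      rwa [if_pos hi] at hmem
  · rcases le_total (t i : ℝ) (1 / 2) with h | h
    · rw [Path.trans_apply_of_le_half _ _ h, Path.trans_apply_of_le_half _ _ h]
      exact hγ₁t i
    · rw [Path.trans_apply_of_half_le _ _ h, Path.trans_apply_of_half_le _ _ h]
      exact hγ₂t i

end HClose

def qsSubgroup (x : X) : Subgroup (FundamentalGroup X x) where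
  carrier := qs x
  one_mem' := ⟨.refl x, .refl x, rfl, Subgroup.one_mem _, .refl _⟩
  mul_mem' := by
    rintro _ _ ⟨f₁, h₁, rfl, hh₁, H₁⟩ ⟨f₂, h₂, rfl, hh₂, H₂⟩
    -- multiplication in `End` is composition in reverse order
    exact ⟨f₂.trans f₁, h₂.trans h₁, rfl, (⊥ : Subgroup _).mul_mem hh₁ hh₂, H₂.trans H₁⟩
  inv_mem' := by
    rintro _ ⟨f, h, rfl, hh, H⟩
    exact ⟨f.symm, h.symm, rfl, (⊥ : Subgroup _).inv_mem hh, H.symm⟩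

theorem smallGenerated_le_qsSubgroup (x : X) : smallGenerated x ≤ qsSubgroup x := by
  refine Subgroup.closure_le _ |>.2 ?_
  rintro _ ⟨y, β, α, hα, rfl⟩
  refine ⟨_, (β.trans (.refl y)).trans β.symm, rfl, ?_, ((HClose.refl β).trans hα).trans
    (HClose.refl β).symm⟩
  simp [pathClass_eq_pathHom, pathHom_trans, pathHom_symm, pathHom_refl]

lemma conj_mem_spanierCover {x y z : X} {𝒰 : Set (Set X)} {U : Set X} (hU : U ∈ 𝒰)
    (u : Path x y) {p q : Path y z} (hp : Set.range p ⊆ U) (hq : Set.range q ⊆ U) :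
    pathHom u ≫ pathHom p ≫ inv (pathHom q) ≫ inv (pathHom u) ∈ spanierCover x 𝒰 := by
  refine Subgroup.subset_closure ⟨y, u, p.trans q.symm, U, hU, ?_, ?_⟩
  · rw [Path.trans_range, Path.symm_range]
    exact Set.union_subset hp hq
  · simp only [pathClass_eq_pathHom, pathHom_trans, pathHom_symm, Category.assoc]

def initialSubpath {a b : X} (γ : Path a b) (s : I) : Path a (γ s) :=
  (γ.subpath 0 s).cast γ.source.symm rfl

lemma pathHom_initialSubpath_comp {a b : X} (γ : Path a b) (s s' : I) :
    pathHom (initialSubpath γ s) ≫ pathHom (γ.subpath s s') = pathHom (initialSubpath γ s') := by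
  simp only [initialSubpath, pathHom_cast, eqToHom_refl, Category.comp_id, Category.assoc,
    pathHom_subpath_comp]

lemma pathHom_initialSubpath_of_eq_zero {a b : X} (γ : Path a b) {s : I} (hs : s = 0) :
    pathHom (initialSubpath γ s) = eqToHom congr(mk $(hs ▸ γ.source.symm)) := by
  subst hs
  simp [initialSubpath, pathHom_cast, pathHom_refl]

lemma pathHom_initialSubpath_of_eq_one {a b : X} (γ : Path a b) {s : I} (hs : s = 1) :
    pathHom (initialSubpath γ s) = pathHom γ ≫ eqToHom congr(mk $(hs ▸ γ.target.symm)) := by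
  subst hs
  simp [initialSubpath, pathHom_cast]

def initialDiff {a b : X} (γ h : Path a b) (s : I) (hs : γ s = h s) : mk a ⟶ mk a :=
  pathHom (initialSubpath γ s) ≫ eqToHom congr(mk $hs) ≫ inv (pathHom (initialSubpath h s))

lemma initialDiff_eq_comp {a b : X} (γ h : Path a b) {s s' : I} (hs : γ s = h s)
    (hs' : γ s' = h s') :
    initialDiff γ h s' hs' = initialDiff γ h s hs ≫
      (pathHom (initialSubpath h s) ≫ pathHom ((γ.subpath s s').cast hs.symm hs'.symm) ≫
        inv (pathHom (h.subpath s s')) ≫ inv (pathHom (initialSubpath h s))) := by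
  simp only [initialDiff, ← pathHom_initialSubpath_comp γ s s',
    ← pathHom_initialSubpath_comp h s s', pathHom_cast, IsIso.inv_comp, Category.assoc,
    IsIso.inv_hom_id_assoc, eqToHom_trans_assoc, eqToHom_refl, Category.id_comp]

lemma initialDiff_of_eq_zero {a b : X} (γ h : Path a b) {s : I} (hs : γ s = h s) (hs0 : s = 0) :
    initialDiff γ h s hs = 𝟙 (mk a) := by
  simp [initialDiff, pathHom_initialSubpath_of_eq_zero _ hs0]

lemma initialDiff_of_eq_one {a b : X} (γ h : Path a b) {s : I} (hs : γ s = h s) (hs1 : s = 1) :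
    initialDiff γ h s hs = pathHom γ ≫ inv (pathHom h) := by
  simp [initialDiff, pathHom_initialSubpath_of_eq_one _ hs1]

theorem pathHom_comp_inv_mem_spanierCover {x : X} {𝒰 : Set (Set X)} {γ h : Path x x} {n : ℕ}
    {t : Fin (n + 1) → I} (ht0 : t 0 = 0) (ht1 : t (Fin.last n) = 1) (ht : Monotone t)
    (hγh : ∀ i, γ (t i) = h (t i)) {U : Fin n → Set X} (hU : ∀ i, U i ∈ 𝒰)
    (hγ : ∀ i : Fin n, γ '' Set.Icc (t i.castSucc) (t i.succ) ⊆ U i)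
    (hh : ∀ i : Fin n, h '' Set.Icc (t i.castSucc) (t i.succ) ⊆ U i) :
    pathHom γ ≫ inv (pathHom h) ∈ spanierCover x 𝒰 := by
  have key : ∀ j, initialDiff γ h (t j) (hγh j) ∈ spanierCover x 𝒰 := by
    intro j
    induction j using Fin.induction with
    | zero => rw [initialDiff_of_eq_zero _ _ _ ht0]; exact one_mem _
    | succ j ih =>
      have hle : t j.castSucc ≤ t j.succ := ht (Fin.castSucc_le_succ j)
      rw [initialDiff_eq_comp γ h (hγh j.castSucc)]
      refine (spanierCover x 𝒰).mul_mem (conj_mem_spanierCover (hU j) _ ?_ ?_) ih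
      · rw [Path.cast_coe, Path.range_subpath_of_le _ _ _ hle]; exact hγ j
      · rw [Path.range_subpath_of_le _ _ _ hle]; exact hh j
  simpa only [initialDiff_of_eq_one _ _ _ ht1] using key (Fin.last n)

theorem Path.exists_monotone_partition_image_subset {a b : X} (h : Path a b) {𝒰 : Set (Set X)}
    (h𝒰o : ∀ U ∈ 𝒰, IsOpen U) (h𝒰 : ⋃₀ 𝒰 = Set.univ) :
    ∃ (n : ℕ) (t : Fin (n + 1) → I), t 0 = 0 ∧ t (Fin.last n) = 1 ∧ Monotone t ∧
      ∃ U : Fin n → Set X, (∀ i, U i ∈ 𝒰) ∧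
        ∀ i : Fin n, h '' Set.Icc (t i.castSucc) (t i.succ) ⊆ U i := by
  obtain ⟨t, ht0, ht, ⟨n, hn⟩, hsub⟩ := exists_monotone_Icc_subset_open_cover_unitInterval
    (c := fun U : 𝒰 => h ⁻¹' U) (fun U => (h𝒰o _ U.2).preimage h.continuous)
    (fun s _ => by
      obtain ⟨U, hU, hsU⟩ := Set.sUnion_eq_univ_iff.1 h𝒰 (h s)
      exact Set.mem_iUnion.2 ⟨⟨U, hU⟩, hsU⟩)
  choose V hV using hsub
  refine ⟨n, fun i => t i, ht0, hn n le_rfl, fun i j hij => ht hij, fun i => V i,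
    fun i => (V i).2, fun i => ?_⟩
  simpa [Set.image_subset_iff] using hV i

theorem qs_subset_spanierGroup (x : X) : qs x ⊆ spanierGroup x := by
  rintro _ ⟨f, h, rfl, hh, H⟩
  simp only [SetLike.mem_coe, spanierGroup, Subgroup.mem_iInf]
  intro 𝒰 h𝒰o h𝒰
  obtain ⟨n, t, ht0, ht1, ht, U, hU𝒰, hhU⟩ := h.exists_monotone_partition_image_subset h𝒰o h𝒰
  obtain ⟨γ, hγU, hγt, hγf⟩ :=
    H.exists_of_monotone ht0 ht1 ht U (fun i => h𝒰o _ (hU𝒰 i)) hhU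
  have hh1 : pathHom h = 𝟙 _ := Subgroup.mem_bot.1 hh
  have := pathHom_comp_inv_mem_spanierCover ht0 ht1 ht hγt hU𝒰 hγU hhU
  rwa [hh1, IsIso.inv_id, Category.comp_id, pathHom_eq_of_homotopic hγf] at this

/-- `π₁^sg(X, x) ≤ π₁^qs(X, x) ≤ π₁^sp(X, x)`. -/
theorem stmt13 (x : X) :
    (smallGenerated x : Set (FundamentalGroup X x)) ⊆ qs x ∧
      qs x ⊆ (spanierGroup x : Set (FundamentalGroup X x)) :=
  ⟨smallGenerated_le_qsSubgroup x, qs_subset_spanierGroup x⟩
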